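/- arXiv:1908.06118 — 4 statements merged into one kernel-verified Lean document; each statement's English description precedes it below -/
import Mathlib

section
/- If p is an ε-projection of x onto C, then for any y ∈ ℝⁿ, ‖p - P_C(y)‖ ≤ ‖x - y‖ + √ε, where P_C(y) is the exact orthogonal projection of y onto C. -/
/-!
Testing the two variational inequalities at `z = q` and `z = p` and adding them, Cauchy–Schwarz
gives `‖p - q‖² ≤ ε + ‖x - y‖ ‖p - q‖`; solving this quadratic inequality in `‖p - q‖` gives the
bound.
-/

open Metric RealInnerProductSpace

theorem le_add_sqrt_of_sq_le_mul_add {t a ε : ℝ} (ha : 0 ≤ a) (hε : 0 ≤ ε)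
    (h : t ^ 2 ≤ a * t + ε) : t ≤ a + √ε := by
  by_contra! hlt
  have hsqrt : √ε ^ 2 = ε := Real.sq_sqrt hε
  nlinarith [Real.sqrt_nonneg ε]

section Projection

variable {E : Type*} [NormedAddCommGroup E] [InnerProductSpace ℝ E]

theorem norm_sub_sq_eq_inner_add_inner_add_inner (x y p q : E) :
    ‖p - q‖ ^ 2 = ⟪x - p, q - p⟫ + ⟪x - y, p - q⟫ + ⟪y - q, p - q⟫ := by
  rw [← real_inner_self_eq_norm_sq]
  simp only [inner_sub_left, inner_sub_right, real_inner_comm p q]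
  ring

theorem norm_sub_le_of_inner_le {x y p q : E} {ε δ : ℝ} (hε : 0 ≤ ε) (hδ : 0 ≤ δ)
    (hp : ⟪x - p, q - p⟫ ≤ ε) (hq : ⟪y - q, p - q⟫ ≤ δ) :
    ‖p - q‖ ≤ ‖x - y‖ + √(ε + δ) := by
  refine le_add_sqrt_of_sq_le_mul_add (norm_nonneg _) (add_nonneg hε hδ) ?_
  have hcs : ⟪x - y, p - q⟫ ≤ ‖x - y‖ * ‖p - q‖ := real_inner_le_norm _ _
  rw [norm_sub_sq_eq_inner_add_inner_add_inner x y p q]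
  linarith

end Projection

theorem eps_projection_quasi_nonexpansive_general {n : ℕ}
    (C : Set (EuclideanSpace ℝ (Fin n)))
    (x y p q : EuclideanSpace ℝ (Fin n)) (ε : ℝ) (hε : 0 ≤ ε)
    (hp : p ∈ C) (hpε : ∀ z ∈ C, ⟪x - p, z - p⟫ ≤ ε)
    (hq : q ∈ C) (hqproj : ∀ z ∈ C, ⟪y - q, z - q⟫ ≤ (0 : ℝ)) :
    ‖p - q‖ ≤ ‖x - y‖ + Real.sqrt ε := by
  simpa using norm_sub_le_of_inner_le hε le_rfl (hpε q hq) (hqproj p hp)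

theorem eps_projection_quasi_nonexpansive {n : ℕ}
    (C : Set (EuclideanSpace ℝ (Fin n)))
    (hCne : C.Nonempty) (hCclosed : IsClosed C) (hCconv : Convex ℝ C)
    (x y p q : EuclideanSpace ℝ (Fin n)) (ε : ℝ) (hε : 0 ≤ ε)
    (hp : p ∈ C) (hpε : ∀ z ∈ C, ⟪x - p, z - p⟫ ≤ ε)
    (hq : q ∈ C) (hqproj : ∀ z ∈ C, ⟪y - q, z - q⟫ ≤ (0 : ℝ)) :
    ‖p - q‖ ≤ ‖x - y‖ + Real.sqrt ε :=
  eps_projection_quasi_nonexpansive_general C x y p q ε hε hp hpε hq hqproj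
end

section
/- Suppose d_k satisfies ‖d_k‖ ≤ c₁·dist(x_k, C*), the error bound ω·dist(x,C*) ≤ ‖F(x)‖ holds on B(x*, δ), ‖F(x_k)+F'(x_k)d_k‖ ≤ c₂·dist(x_k,C*)², the quadratic estimate ‖F(x_k + d_k) - F(x_k) - F'(x_k)d_k‖ ≤ (L/2)‖d_k‖² holds, and x_{k+1} is an ε_k-projection of x_k + d_k onto C with ε_k = θ_k²‖d_k‖². If x_k, x_k + d_k ∈ B(x*, δ/2), then dist(x_{k+1}, C*) ≤ θ_k c₁ dist(x_k, C*) + ((2c₂ + Lc₁²)/(2ω)) dist(x_k, C*)². -/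
/-!
An ε-projection `p` of `z` onto `C` with `ε = r²` is at most `r` farther than `z` from every
point of `C`, hence `dist(p, C*) ≤ dist(z, C*) + r`. For `z = x_k + d_k` the error bound turns
`dist(z, C*)` into `‖F z‖ / ω`, and `F z` splits into the linearization error `≤ (L/2)‖d_k‖²`
plus the residual `≤ c₂ dist(x_k, C*)²`; finally `‖d_k‖ ≤ c₁ dist(x_k, C*)`.
-/

open Metric RealInnerProductSpace

lemma le_add_of_sq_le_sq_add_mul {t a r : ℝ} (ha : 0 ≤ a) (hr : 0 ≤ r)
    (h : t ^ 2 ≤ r ^ 2 + a * t) : t ≤ a + r := by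
  nlinarith

lemma dist_le_dist_add_of_inner_le_sq {E : Type*} [NormedAddCommGroup E]
    [InnerProductSpace ℝ E] {z p y : E} {r : ℝ} (hr : 0 ≤ r)
    (h : ⟪z - p, y - p⟫ ≤ r ^ 2) : dist p y ≤ dist z y + r := by
  rw [dist_eq_norm, dist_eq_norm]
  refine le_add_of_sq_le_sq_add_mul (norm_nonneg _) hr ?_
  have hswap : ⟪p - z, p - y⟫ = ⟪z - p, y - p⟫ := by rw [← inner_neg_neg, neg_sub, neg_sub]
  calc ‖p - y‖ ^ 2 = ⟪(p - z) + (z - y), p - y⟫ := by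
        rw [sub_add_sub_cancel, real_inner_self_eq_norm_sq]
    _ = ⟪z - p, y - p⟫ + ⟪z - y, p - y⟫ := by rw [inner_add_left, hswap]
    _ ≤ r ^ 2 + ‖z - y‖ * ‖p - y‖ := add_le_add h (real_inner_le_norm _ _)

lemma Metric.infDist_le_infDist_add_of_forall_dist_le {α : Type*} [PseudoMetricSpace α]
    {s : Set α} {x z : α} {r : ℝ} (hs : s.Nonempty) (h : ∀ y ∈ s, dist x y ≤ dist z y + r) :
    infDist x s ≤ infDist z s + r := by
  rw [← sub_le_iff_le_add, le_infDist hs]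
  intro y hy
  linarith [infDist_le_dist_of_mem (x := x) hy, h y hy]

theorem dist_recursion_general {n m : ℕ}
    (C Cs : Set (EuclideanSpace ℝ (Fin n)))
    (F : EuclideanSpace ℝ (Fin n) → EuclideanSpace ℝ (Fin m))
    (F' : EuclideanSpace ℝ (Fin n) →
      (EuclideanSpace ℝ (Fin n) →L[ℝ] EuclideanSpace ℝ (Fin m)))
    (hCs : Cs = {x ∈ C | F x = 0}) (hCsne : Cs.Nonempty)
    (ω L c₁ c₂ δ θ : ℝ)
    (hω : 0 < ω) (hL : 0 < L) (hδ : 0 < δ)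
    (hθ : 0 ≤ θ)
    (xstar xk dk xk1 : EuclideanSpace ℝ (Fin n))
    (heb : ∀ x ∈ closedBall xstar δ, ω * infDist x Cs ≤ ‖F x‖)
    (hdk : ‖dk‖ ≤ c₁ * infDist xk Cs)
    (hres : ‖F xk + F' xk dk‖ ≤ c₂ * (infDist xk Cs) ^ 2)
    (hquad : ‖F (xk + dk) - F xk - F' xk dk‖ ≤ L / 2 * ‖dk‖ ^ 2)
    (hproj : ∀ y ∈ C, ⟪(xk + dk) - xk1, y - xk1⟫ ≤ θ ^ 2 * ‖dk‖ ^ 2)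
    (hball2 : xk + dk ∈ closedBall xstar (δ / 2)) :
    infDist xk1 Cs ≤ θ * c₁ * infDist xk Cs +
      ((2 * c₂ + L * c₁ ^ 2) / (2 * ω)) * (infDist xk Cs) ^ 2 := by
  set d := infDist xk Cs
  have hproj_dist : infDist xk1 Cs ≤ infDist (xk + dk) Cs + θ * ‖dk‖ := by
    refine infDist_le_infDist_add_of_forall_dist_le hCsne fun y hy => ?_
    have hyC : y ∈ C := (hCs ▸ hy).1
    exact dist_le_dist_add_of_inner_le_sq (by positivity) (mul_pow θ ‖dk‖ 2 ▸ hproj y hyC)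
  have hz_ball : xk + dk ∈ closedBall xstar δ := closedBall_subset_closedBall (by linarith) hball2
  have herr : infDist (xk + dk) Cs ≤ ‖F (xk + dk)‖ / ω := by
    rw [le_div_iff₀ hω, mul_comm]; exact heb _ hz_ball
  have hdk_sq : ‖dk‖ ^ 2 ≤ (c₁ * d) ^ 2 := pow_le_pow_left₀ (norm_nonneg _) hdk 2
  have hFz : ‖F (xk + dk)‖ ≤ L / 2 * (c₁ * d) ^ 2 + c₂ * d ^ 2 := by
    have := norm_le_norm_add_norm_sub' (F (xk + dk)) (F xk + F' xk dk)
    rw [← sub_sub] at this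
    linarith [mul_le_mul_of_nonneg_left hdk_sq (by positivity : 0 ≤ L / 2)]
  calc infDist xk1 Cs ≤ ‖F (xk + dk)‖ / ω + θ * (c₁ * d) := by
        linarith [mul_le_mul_of_nonneg_left hdk hθ]
    _ ≤ (L / 2 * (c₁ * d) ^ 2 + c₂ * d ^ 2) / ω + θ * (c₁ * d) := by gcongr
    _ = θ * c₁ * d + ((2 * c₂ + L * c₁ ^ 2) / (2 * ω)) * d ^ 2 := by field_simp; ring

theorem dist_recursion {n m : ℕ}
    (C Cs : Set (EuclideanSpace ℝ (Fin n)))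
    (hCne : C.Nonempty) (hCclosed : IsClosed C) (hCconv : Convex ℝ C)
    (F : EuclideanSpace ℝ (Fin n) → EuclideanSpace ℝ (Fin m))
    (F' : EuclideanSpace ℝ (Fin n) →
      (EuclideanSpace ℝ (Fin n) →L[ℝ] EuclideanSpace ℝ (Fin m)))
    (hCs : Cs = {x ∈ C | F x = 0}) (hCsne : Cs.Nonempty)
    (ω L c₁ c₂ δ θ : ℝ)
    (hω : 0 < ω) (hL : 0 < L) (hc₁ : 0 < c₁) (hc₂ : 0 < c₂) (hδ : 0 < δ)
    (hθ : 0 ≤ θ)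
    (xstar xk dk xk1 : EuclideanSpace ℝ (Fin n)) (hxstar : xstar ∈ Cs)
    (heb : ∀ x ∈ closedBall xstar δ, ω * infDist x Cs ≤ ‖F x‖)
    (hdk : ‖dk‖ ≤ c₁ * infDist xk Cs)
    (hres : ‖F xk + F' xk dk‖ ≤ c₂ * (infDist xk Cs) ^ 2)
    (hquad : ‖F (xk + dk) - F xk - F' xk dk‖ ≤ L / 2 * ‖dk‖ ^ 2)
    (hprojmem : xk1 ∈ C)
    (hproj : ∀ y ∈ C, ⟪(xk + dk) - xk1, y - xk1⟫ ≤ θ ^ 2 * ‖dk‖ ^ 2)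
    (hball1 : xk ∈ closedBall xstar (δ / 2))
    (hball2 : xk + dk ∈ closedBall xstar (δ / 2)) :
    infDist xk1 Cs ≤ θ * c₁ * infDist xk Cs +
      ((2 * c₂ + L * c₁ ^ 2) / (2 * ω)) * (infDist xk Cs) ^ 2 :=
  dist_recursion_general C Cs F F' hCs hCsne ω L c₁ c₂ δ θ hω hL hδ hθ xstar xk dk xk1 heb hdk hres
    hquad hproj hball2
end

section
/- Under the hypotheses of the previous distance recursion, if additionally θ_k ≤ θ̄ < 1/c₁ and x_k, x_k + d_k ∈ B(x*, σ/2) where σ < min{δ, 4ω(1 - θ̄c₁)/(2c₂ + Lc₁²)}, then dist(x_{k+1}, C*) ≤ η · dist(x_k, C*) with η := θ̄c₁ + (2c₂ + Lc₁²)σ/(4ω), and η ∈ (0, 1). -/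
/-!
Since `x*` lies in `C*`, `dist(x_k, C*) ≤ ‖x_k - x*‖ ≤ σ/2`, so the quadratic term of the
distance recursion is at most `(σ/2) · dist(x_k, C*)` times its coefficient, which turns the
recursion into a linear one with factor `η`. The bound on `σ` is exactly `η < 1`.
-/

open Metric RealInnerProductSpace

theorem Metric.infDist_le_of_mem_closedBall {α : Type*} [PseudoMetricSpace α] {x y : α}
    {s : Set α} {r : ℝ} (hx : x ∈ closedBall y r) (hy : y ∈ s) : infDist x s ≤ r :=
  (infDist_le_dist_of_mem hy).trans (mem_closedBall.1 hx)

theorem mul_add_mul_sq_le_of_le {a b b' d r : ℝ} (hb : b ≤ b') (ha : 0 ≤ a) (hd : 0 ≤ d)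
    (hdr : d ≤ r) : b * d + a * d ^ 2 ≤ (b' + a * r) * d := by
  have hsq : d ^ 2 ≤ r * d := by
    rw [sq]
    exact mul_le_mul_of_nonneg_right hdr hd
  calc b * d + a * d ^ 2 ≤ b' * d + a * (r * d) := by
        gcongr
    _ = (b' + a * r) * d := by ring

theorem add_mul_div_lt_one_of_lt_div {t K ω σ : ℝ} (hK : 0 < K) (hω : 0 < ω)
    (hσ : σ < 4 * ω * (1 - t) / K) : t + K * σ / (4 * ω) < 1 := by
  rw [lt_div_iff₀ hK] at hσ
  have : K * σ / (4 * ω) < 1 - t := by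
    rw [div_lt_iff₀ (by positivity)]
    linarith
  linarith

theorem dist_linear_decrease_general {n : ℕ}
    (Cs : Set (EuclideanSpace ℝ (Fin n)))
    (ω L c₁ c₂ θ θbar σ : ℝ)
    (hω : 0 < ω) (hL : 0 < L) (hc₁ : 0 < c₁) (hc₂ : 0 < c₂)
    (hθθbar : θ ≤ θbar) (hθbar0 : 0 ≤ θbar)
    (hσ0 : 0 < σ)
    (hσ : σ < 4 * ω * (1 - θbar * c₁) / (2 * c₂ + L * c₁ ^ 2))
    (xstar xk xk1 : EuclideanSpace ℝ (Fin n)) (hxstar : xstar ∈ Cs)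
    (hball1 : xk ∈ closedBall xstar (σ / 2))
    (hrec : infDist xk1 Cs ≤ θ * c₁ * infDist xk Cs +
      ((2 * c₂ + L * c₁ ^ 2) / (2 * ω)) * (infDist xk Cs) ^ 2) :
    infDist xk1 Cs ≤
        (θbar * c₁ + (2 * c₂ + L * c₁ ^ 2) * σ / (4 * ω)) * infDist xk Cs ∧
      0 < θbar * c₁ + (2 * c₂ + L * c₁ ^ 2) * σ / (4 * ω) ∧
        θbar * c₁ + (2 * c₂ + L * c₁ ^ 2) * σ / (4 * ω) < 1 := by
  have hK : 0 < 2 * c₂ + L * c₁ ^ 2 := by positivity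
  have hdist : infDist xk Cs ≤ σ / 2 := infDist_le_of_mem_closedBall hball1 hxstar
  refine ⟨?_, by positivity, add_mul_div_lt_one_of_lt_div hK hω hσ⟩
  calc infDist xk1 Cs
      ≤ θ * c₁ * infDist xk Cs + ((2 * c₂ + L * c₁ ^ 2) / (2 * ω)) * (infDist xk Cs) ^ 2 := hrec
    _ ≤ (θbar * c₁ + (2 * c₂ + L * c₁ ^ 2) / (2 * ω) * (σ / 2)) * infDist xk Cs :=
        mul_add_mul_sq_le_of_le (by gcongr) (by positivity) infDist_nonneg hdist
    _ = (θbar * c₁ + (2 * c₂ + L * c₁ ^ 2) * σ / (4 * ω)) * infDist xk Cs := by ring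

theorem dist_linear_decrease {n m : ℕ}
    (Cs : Set (EuclideanSpace ℝ (Fin n))) (hCsne : Cs.Nonempty)
    (F : EuclideanSpace ℝ (Fin n) → EuclideanSpace ℝ (Fin m))
    (ω L c₁ c₂ δ θ θbar σ : ℝ)
    (hω : 0 < ω) (hL : 0 < L) (hc₁ : 0 < c₁) (hc₂ : 0 < c₂) (hδ : 0 < δ)
    (hθ : 0 ≤ θ) (hθθbar : θ ≤ θbar) (hθbar0 : 0 ≤ θbar)
    (hθbar : θbar < 1 / c₁)
    (hσ0 : 0 < σ) (hσδ : σ < δ)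
    (hσ : σ < 4 * ω * (1 - θbar * c₁) / (2 * c₂ + L * c₁ ^ 2))
    (xstar xk dk xk1 : EuclideanSpace ℝ (Fin n)) (hxstar : xstar ∈ Cs)
    (hball1 : xk ∈ closedBall xstar (σ / 2))
    (hball2 : xk + dk ∈ closedBall xstar (σ / 2))
    (hrec : infDist xk1 Cs ≤ θ * c₁ * infDist xk Cs +
      ((2 * c₂ + L * c₁ ^ 2) / (2 * ω)) * (infDist xk Cs) ^ 2) :
    infDist xk1 Cs ≤
        (θbar * c₁ + (2 * c₂ + L * c₁ ^ 2) * σ / (4 * ω)) * infDist xk Cs ∧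
      0 < θbar * c₁ + (2 * c₂ + L * c₁ ^ 2) * σ / (4 * ω) ∧
        θbar * c₁ + (2 * c₂ + L * c₁ ^ 2) * σ / (4 * ω) < 1 :=
  dist_linear_decrease_general Cs ω L c₁ c₂ θ θbar σ hω hL hc₁ hc₂ hθθbar hθbar0 hσ0 hσ xstar xk xk1
    hxstar hball1 hrec
end

section
/- Let y be an ε-projection of x - g onto C with ε = θ²‖y - x‖², x ∈ C, and θ ≤ θ̄ < 1. Then (1 - θ̄)‖y - x‖ ≤ ‖g‖, i.e., ‖d‖ ≤ ‖g‖/(1 - θ̄) where d = y - x. -/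
/-!
Testing the ε-projection inequality at the feasible point `w = x` gives
`‖y - x‖² - ⟪g, x - y⟫ ≤ θ² ‖y - x‖²`, so by Cauchy–Schwarz `(1 - θ²) ‖y - x‖ ≤ ‖g‖`;
and `1 - θbar ≤ 1 - θ ≤ (1 - θ)(1 + θ)` whenever `0 ≤ θ ≤ 1`.
-/

open RealInnerProductSpace

theorem norm_sub_sq_le_of_inner_sub_sub_le {E : Type*} [NormedAddCommGroup E]
    [InnerProductSpace ℝ E] {x y g : E} {ε : ℝ} (h : ⟪(x - g) - y, x - y⟫ ≤ ε) :
    ‖y - x‖ ^ 2 ≤ ‖g‖ * ‖y - x‖ + ε := by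
  have hexpand : ⟪(x - g) - y, x - y⟫ = ‖y - x‖ ^ 2 - ⟪g, x - y⟫ := by
    rw [sub_right_comm, inner_sub_left, real_inner_self_eq_norm_sq, norm_sub_rev]
  have hcs : ⟪g, x - y⟫ ≤ ‖g‖ * ‖y - x‖ := norm_sub_rev x y ▸ real_inner_le_norm g (x - y)
  linarith

theorem one_sub_mul_le_of_sq_le_mul_add_sq_mul_sq {a b θ : ℝ} (hθ : 0 ≤ θ) (ha : 0 ≤ a)
    (hb : 0 ≤ b) (h : a ^ 2 ≤ b * a + θ ^ 2 * a ^ 2) : (1 - θ) * a ≤ b := by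
  rcases le_or_gt θ 1 with hθ1 | hθ1
  · rcases ha.eq_or_lt with rfl | ha
    · simpa using hb
    have hdiv : (1 - θ ^ 2) * a ≤ b := le_of_mul_le_mul_right (by nlinarith) ha
    nlinarith
  · nlinarith

theorem inexact_projected_gradient_upper_bound_general {n : ℕ}
    (C : Set (EuclideanSpace ℝ (Fin n)))
    (x y g : EuclideanSpace ℝ (Fin n)) (θ θbar : ℝ)
    (hθ0 : 0 ≤ θ) (hθ : θ ≤ θbar)
    (hx : x ∈ C)
    (hproj : ∀ w ∈ C, ⟪(x - g) - y, w - y⟫ ≤ θ ^ 2 * ‖y - x‖ ^ 2) :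
    (1 - θbar) * ‖y - x‖ ≤ ‖g‖ := calc
  (1 - θbar) * ‖y - x‖ ≤ (1 - θ) * ‖y - x‖ := by gcongr
  _ ≤ ‖g‖ := one_sub_mul_le_of_sq_le_mul_add_sq_mul_sq hθ0 (norm_nonneg _) (norm_nonneg _)
    (norm_sub_sq_le_of_inner_sub_sub_le (hproj x hx))

theorem inexact_projected_gradient_upper_bound {n : ℕ}
    (C : Set (EuclideanSpace ℝ (Fin n)))
    (hCne : C.Nonempty) (hCclosed : IsClosed C) (hCconv : Convex ℝ C)
    (x y g : EuclideanSpace ℝ (Fin n)) (θ θbar : ℝ)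
    (hθ0 : 0 ≤ θ) (hθ : θ ≤ θbar) (hθbar : θbar < 1)
    (hx : x ∈ C) (hy : y ∈ C)
    (hproj : ∀ w ∈ C, ⟪(x - g) - y, w - y⟫ ≤ θ ^ 2 * ‖y - x‖ ^ 2) :
    (1 - θbar) * ‖y - x‖ ≤ ‖g‖ :=
  inexact_projected_gradient_upper_bound_general C x y g θ θbar hθ0 hθ hx hproj
end
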